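/- arXiv:1611.10191 — 9 statements merged into one kernel-verified Lean document; each statement's English description precedes it below -/
import Mathlib

section
/- Assume t_N, t_NoN > 0, κ_u > 0, κ_ad > 0, 0 < q̃_f < q̃_p, and let p̃, Δp be real. Suppose 0 < x_N(q̃_f, q̃_p) < 1 and 0 < x_N(0, q̃_p) < 1 (both strategies lie in the interior region F^I). Then Π(q̃_f, q̃_p, 1) ≥ Π(0, q̃_p, 1) if and only if Δp ≥ κ_u·(2q̃_p − q̃_f) − t_NoN. -/
/-- Indifference location of end-users given qualities on each ISP. -/
noncomputable def xN (tN tNoN κu Δp qN qNoN : ℝ) : ℝ :=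
  (tNoN + κu * (qN - qNoN) + Δp) / (tN + tNoN)

/-- Fraction of end-users joining the neutral ISP. -/
noncomputable def nN (tN tNoN κu Δp qN qNoN : ℝ) : ℝ :=
  min 1 (max 0 (xN tN tNoN κu Δp qN qNoN))

/-- CP payoff: `n_N κ_ad q_N + n_NoN κ_ad q_NoN − z p̃ q_NoN` with `n_NoN = 1 − n_N`. -/
noncomputable def Pi (tN tNoN κu Δp κad ptilde qN qNoN z : ℝ) : ℝ :=
  nN tN tNoN κu Δp qN qNoN * κad * qN
    + (1 - nN tN tNoN κu Δp qN qNoN) * κad * qNoN - z * ptilde * qNoN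

/-- if both `(q̃_f, q̃_p)` and `(0, q̃_p)` lie in the interior region,
then `Π(q̃_f, q̃_p, 1) ≥ Π(0, q̃_p, 1)` iff `Δp ≥ κ_u (2 q̃_p − q̃_f) − t_NoN`. -/
theorem payoff_compare_interior
    (tN tNoN κu κad qf qp ptilde Δp : ℝ)
    (htN : 0 < tN) (htNoN : 0 < tNoN) (hκu : 0 < κu) (hκad : 0 < κad)
    (hqf : 0 < qf) (hq : qf < qp)
    (h1 : 0 < xN tN tNoN κu Δp qf qp) (h2 : xN tN tNoN κu Δp qf qp < 1)
    (h3 : 0 < xN tN tNoN κu Δp 0 qp) (h4 : xN tN tNoN κu Δp 0 qp < 1) :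
    Pi tN tNoN κu Δp κad ptilde qf qp 1 ≥ Pi tN tNoN κu Δp κad ptilde 0 qp 1 ↔
      Δp ≥ κu * (2 * qp - qf) - tNoN := by
  have hT : 0 < tN + tNoN := by linarith
  have hn1 : nN tN tNoN κu Δp qf qp = xN tN tNoN κu Δp qf qp := by
    unfold nN; rw [max_eq_right h1.le, min_eq_right h2.le]
  have hn2 : nN tN tNoN κu Δp 0 qp = xN tN tNoN κu Δp 0 qp := by
    unfold nN; rw [max_eq_right h3.le, min_eq_right h4.le]
  have key : Pi tN tNoN κu Δp κad ptilde qf qp 1 - Pi tN tNoN κu Δp κad ptilde 0 qp 1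
      = κad * qf * ((Δp - (κu * (2 * qp - qf) - tNoN)) / (tN + tNoN)) := by
    unfold Pi
    rw [hn1, hn2]
    unfold xN
    field_simp
    ring
  rw [ge_iff_le, ← sub_nonneg, key, ge_iff_le, ← sub_nonneg (b := κu * (2 * qp - qf) - tNoN)]
  have hc : 0 < κad * qf := mul_pos hκad hqf
  constructor
  · intro h
    have h' : 0 ≤ (Δp - (κu * (2 * qp - qf) - tNoN)) / (tN + tNoN) :=
      nonneg_of_mul_nonneg_right h hc
    have h'' : 0 ≤ (Δp - (κu * (2 * qp - qf) - tNoN)) / (tN + tNoN) * (tN + tNoN) :=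
      mul_nonneg h' hT.le
    rwa [div_mul_cancel₀ _ hT.ne'] at h'' 
  · intro h
    positivity
end

section
/- In the benchmark neutral pricing game with t_N, t_NoN > 0 and marginal cost c, the pair p_N* = c + (2t_NoN + t_N)/3, p_NoN* = c + (2t_N + t_NoN)/3 is a Nash equilibrium, and it is the unique Nash equilibrium: any pair (p_N, p_NoN) ∈ ℝ² from which neither ISP has a strictly profitable unilateral price deviation equals (p_N*, p_NoN*). -/
/-- Fraction of end-users joining the neutral ISP in the benchmark neutral game. -/
noncomputable def nu (tN tNoN pN pNoN : ℝ) : ℝ :=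
  min 1 (max 0 ((tNoN + pNoN - pN) / (tN + tNoN)))

/-- Payoff of the neutral ISP. -/
noncomputable def piN (tN tNoN c pN pNoN : ℝ) : ℝ :=
  (pN - c) * nu tN tNoN pN pNoN

/-- Payoff of the non-neutral ISP. -/
noncomputable def piNoN (tN tNoN c pN pNoN : ℝ) : ℝ :=
  (pNoN - c) * (1 - nu tN tNoN pN pNoN)

/-- Nash equilibrium of the benchmark neutral pricing game. -/
def IsNash (tN tNoN c pN pNoN : ℝ) : Prop :=
  (∀ p : ℝ, piN tN tNoN c p pNoN ≤ piN tN tNoN c pN pNoN) ∧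
  (∀ p : ℝ, piNoN tN tNoN c pN p ≤ piNoN tN tNoN c pN pNoN)


private lemma clamp_nonneg (z : ℝ) : 0 ≤ min 1 (max 0 z) :=
  le_min zero_le_one (le_max_left 0 z)

private lemma one_sub_clamp (z : ℝ) : 1 - min 1 (max 0 z) = min 1 (max 0 (1 - z)) := by
  rcases le_total z 0 with h | h <;> rcases le_total z 1 with h1 | h1 <;>
    rw [min_def, min_def, max_def, max_def] <;> split_ifs <;> linarith

private lemma clamp_eq_self {z : ℝ} (h0 : 0 < z) (h1 : z < 1) : min 1 (max 0 z) = z := by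
  rw [max_eq_right h0.le, min_eq_right h1.le]

private lemma pos_of_clamp_pos {z : ℝ} (h : 0 < min 1 (max 0 z)) : 0 < z := by
  by_contra h'
  push_neg at h'
  rw [max_eq_left h'] at h
  simp at h

private lemma lt_one_of_clamp_lt_one {z : ℝ} (h : min 1 (max 0 z) < 1) : z < 1 := by
  by_contra h'
  push_neg at h'
  rw [max_eq_right (by linarith), min_eq_left h'] at h
  exact lt_irrefl _ h

private lemma nonpos_of_clamp_eq_zero {z : ℝ} (h : min 1 (max 0 z) = 0) : z ≤ 0 := by
  by_contra h'
  push_neg at h'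
  rw [max_eq_right h'.le, min_def] at h
  split_ifs at h <;> linarith

private lemma br_bound {T : ℝ} (hT : 0 < T) (x q : ℝ) :
    q * min 1 (max 0 ((x - q) / T)) ≤ x ^ 2 / (4 * T) := by
  have h4T : (0:ℝ) < 4 * T := by linarith
  have hx2 : 0 ≤ x ^ 2 / (4 * T) := by positivity
  rcases le_or_gt q 0 with hq | hq
  · have h := mul_nonpos_of_nonpos_of_nonneg hq (clamp_nonneg ((x - q) / T))
    linarith
  · rcases le_or_gt ((x - q) / T) 0 with hz | hz
    · rw [max_eq_left hz]
      simpa using hx2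
    · have hc : min 1 (max 0 ((x - q) / T)) ≤ (x - q) / T := by
        rw [max_eq_right hz.le]; exact min_le_right _ _
      have h1 : q * min 1 (max 0 ((x - q) / T)) ≤ q * ((x - q) / T) :=
        mul_le_mul_of_nonneg_left hc hq.le
      have h2 : q * ((x - q) / T) ≤ x ^ 2 / (4 * T) := by
        rw [show q * ((x - q) / T) = q * (x - q) / T from by ring, div_le_div_iff₀ hT h4T]
        nlinarith [sq_nonneg (x - 2 * q)]
      linarith

private lemma payoff_nonpos {T x : ℝ} (hT : 0 < T) (hx : x ≤ 0) (q : ℝ) :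
    q * min 1 (max 0 ((x - q) / T)) ≤ 0 := by
  rcases le_or_gt q 0 with hq | hq
  · exact mul_nonpos_of_nonpos_of_nonneg hq (clamp_nonneg _)
  · have h : (x - q) / T < 0 := div_neg_of_neg_of_pos (by linarith) hT
    rw [max_eq_left h.le]
    simp

private lemma payoff_pos {T x : ℝ} (hT : 0 < T) (hx : 0 < x) :
    0 < (x / 2) * min 1 (max 0 ((x - x / 2) / T)) := by
  have h : 0 < (x - x / 2) / T := by
    rw [show x - x / 2 = x / 2 from by ring]
    positivity
  have hm : 0 < min 1 (max 0 ((x - x / 2) / T)) :=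
    lt_min one_pos (lt_max_of_lt_right h)
  exact mul_pos (by linarith) hm

/-- If the rival's effective position `x` is nonpositive, a Nash contradiction arises. -/
private lemma step_pos {T x y a b : ℝ} (hT : 0 < T)
    (hsum : x + y = T + a + b) (hbx : b < x) (hay : a < y)
    (hN : ∀ q : ℝ, q * min 1 (max 0 ((x - q) / T)) ≤ a * min 1 (max 0 ((x - a) / T)))
    (hM : ∀ q : ℝ, q * min 1 (max 0 ((y - q) / T)) ≤ b * min 1 (max 0 ((y - b) / T))) :
    0 < x := by
  by_contra hx
  push_neg at hx
  have hb : b < 0 := lt_of_lt_of_le hbx hx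
  have h0 : 0 ≤ a * min 1 (max 0 ((x - a) / T)) := by
    have := hN 0
    simpa using this
  have h1 : a * min 1 (max 0 ((x - a) / T)) ≤ 0 := payoff_nonpos hT hx a
  rcases le_or_gt y 0 with hy | hy
  · -- both payoffs are zero, contradiction
    have ha : a < 0 := lt_of_lt_of_le hay hy
    have h0' : 0 ≤ b * min 1 (max 0 ((y - b) / T)) := by
      have := hM 0
      simpa using this
    have h1' : b * min 1 (max 0 ((y - b) / T)) ≤ 0 := payoff_nonpos hT hy b
    have hca : min 1 (max 0 ((x - a) / T)) = 0 := by
      have heq : a * min 1 (max 0 ((x - a) / T)) = 0 := le_antisymm h1 h0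
      exact (mul_eq_zero.mp heq).resolve_left (by linarith)
    have hcb : min 1 (max 0 ((y - b) / T)) = 0 := by
      have heq : b * min 1 (max 0 ((y - b) / T)) = 0 := le_antisymm h1' h0'
      exact (mul_eq_zero.mp heq).resolve_left (by linarith)
    have hza : (x - a) / T ≤ 0 := nonpos_of_clamp_eq_zero hca
    have hzb : (y - b) / T ≤ 0 := nonpos_of_clamp_eq_zero hcb
    have hna : x - a ≤ 0 := by
      rcases div_nonpos_iff.mp hza with ⟨_, h⟩ | ⟨h, _⟩ <;> linarith
    have hnb : y - b ≤ 0 := by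
      rcases div_nonpos_iff.mp hzb with ⟨_, h⟩ | ⟨h, _⟩ <;> linarith
    linarith
  · -- the rival can profit, contradicting b < 0
    have hp := payoff_pos hT hy
    have hle := hM (y / 2)
    have hpos : 0 < b * min 1 (max 0 ((y - b) / T)) := lt_of_lt_of_le hp hle
    have := mul_nonpos_of_nonpos_of_nonneg hb.le (clamp_nonneg ((y - b) / T))
    linarith

/-- First-order condition: interior best response gives `2a = x`. -/
private lemma key {T x a z : ℝ} (hT : 0 < T)
    (hz : z = (x - a) / T) (hz0 : 0 < z) (hz1 : z < 1) (ha : 0 < a)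
    (hmax : ∀ q : ℝ, q * min 1 (max 0 ((x - q) / T)) ≤ a * z) :
    2 * a = x := by
  have hxa : a < x := by
    have h : 0 < (x - a) / T := hz ▸ hz0
    nlinarith [mul_pos h hT, div_mul_cancel₀ (x - a) (ne_of_gt hT)]
  have hzT : x - a < T := by
    have h : (x - a) / T < 1 := hz ▸ hz1
    exact (div_lt_one hT).mp h
  have havz : a * z = a * (x - a) / T := by rw [hz]; ring
  rcases le_or_gt x (2 * T) with hx | hx
  · have hq := hmax (x / 2)
    have hx0 : 0 < x := by linarith
    have harg : (x - x / 2) / T = x / (2 * T) := by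
      rw [show x - x / 2 = x / 2 from by ring]
      rw [div_div]
    have hle1 : x / (2 * T) ≤ 1 := by
      rw [div_le_one (by linarith)]; linarith
    have hge0 : 0 < x / (2 * T) := by positivity
    rw [harg, max_eq_right hge0.le, min_eq_right hle1, havz] at hq
    rw [show x / 2 * (x / (2 * T)) = x ^ 2 / (4 * T) from by field_simp; ring] at hq
    rw [div_le_div_iff₀ (by linarith) hT] at hq
    have hsq : (x - 2 * a) ^ 2 ≤ 0 := by nlinarith
    have h0 : (x - 2 * a) ^ 2 = 0 := le_antisymm hsq (sq_nonneg _)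
    have := sq_eq_zero_iff.mp h0
    linarith
  · exfalso
    have hq := hmax (x - T)
    have harg : (x - (x - T)) / T = 1 := by
      rw [show x - (x - T) = T from by ring, div_self (ne_of_gt hT)]
    rw [harg, max_eq_right zero_le_one, min_self, mul_one, havz, le_div_iff₀ hT] at hq
    nlinarith [mul_pos (show 0 < a - T by linarith) (show 0 < a - (x - T) by linarith)]


private lemma piN_eq (tN tNoN c pNoN p : ℝ) :
    piN tN tNoN c p pNoN
      = (p - c) * min 1 (max 0 ((tNoN + pNoN - c - (p - c)) / (tN + tNoN))) := by
  rw [piN, nu, show tNoN + pNoN - p = tNoN + pNoN - c - (p - c) from by ring]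

private lemma piNoN_eq (tN tNoN c pN p : ℝ) (hT : tN + tNoN ≠ 0) :
    piNoN tN tNoN c pN p
      = (p - c) * min 1 (max 0 ((tN + pN - c - (p - c)) / (tN + tNoN))) := by
  rw [piNoN, nu, one_sub_clamp]
  congr 3
  field_simp
  ring

/-- `p_N* = c + (2t_NoN + t_N)/3`, `p_NoN* = c + (2t_N + t_NoN)/3` is the
unique Nash equilibrium of the benchmark neutral pricing game. -/
theorem benchmark_unique_nash
    (tN tNoN c : ℝ) (htN : 0 < tN) (htNoN : 0 < tNoN) :
    IsNash tN tNoN c (c + (2 * tNoN + tN) / 3) (c + (2 * tN + tNoN) / 3) ∧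
    ∀ pN pNoN : ℝ, IsNash tN tNoN c pN pNoN →
      pN = c + (2 * tNoN + tN) / 3 ∧ pNoN = c + (2 * tN + tNoN) / 3 := by
  have hT : (0:ℝ) < tN + tNoN := by linarith
  have hT' : tN + tNoN ≠ 0 := ne_of_gt hT
  constructor
  · constructor
    · intro p
      rw [piN_eq, piN_eq]
      rw [show tNoN + (c + (2 * tN + tNoN) / 3) - c = (2 * tN + 4 * tNoN) / 3 from by ring]
      rw [show c + (2 * tNoN + tN) / 3 - c = (2 * tNoN + tN) / 3 from by ring]
      rw [show (2 * tN + 4 * tNoN) / 3 - (2 * tNoN + tN) / 3 = (tN + 2 * tNoN) / 3 from by ring]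
      have hcl : min 1 (max 0 ((tN + 2 * tNoN) / 3 / (tN + tNoN)))
          = (tN + 2 * tNoN) / 3 / (tN + tNoN) := by
        apply clamp_eq_self
        · positivity
        · rw [div_lt_one hT]; linarith
      rw [hcl]
      calc (p - c) * min 1 (max 0 (((2 * tN + 4 * tNoN) / 3 - (p - c)) / (tN + tNoN)))
          ≤ ((2 * tN + 4 * tNoN) / 3) ^ 2 / (4 * (tN + tNoN)) := br_bound hT _ _
        _ = (2 * tNoN + tN) / 3 * ((tN + 2 * tNoN) / 3 / (tN + tNoN)) := by
            field_simp; ring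
    · intro p
      rw [piNoN_eq _ _ _ _ _ hT', piNoN_eq _ _ _ _ _ hT']
      rw [show tN + (c + (2 * tNoN + tN) / 3) - c = (4 * tN + 2 * tNoN) / 3 from by ring]
      rw [show c + (2 * tN + tNoN) / 3 - c = (2 * tN + tNoN) / 3 from by ring]
      rw [show (4 * tN + 2 * tNoN) / 3 - (2 * tN + tNoN) / 3 = (2 * tN + tNoN) / 3 from by ring]
      have hcl : min 1 (max 0 ((2 * tN + tNoN) / 3 / (tN + tNoN)))
          = (2 * tN + tNoN) / 3 / (tN + tNoN) := by
        apply clamp_eq_self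
        · positivity
        · rw [div_lt_one hT]; linarith
      rw [hcl]
      calc (p - c) * min 1 (max 0 (((4 * tN + 2 * tNoN) / 3 - (p - c)) / (tN + tNoN)))
          ≤ ((4 * tN + 2 * tNoN) / 3) ^ 2 / (4 * (tN + tNoN)) := br_bound hT _ _
        _ = (2 * tN + tNoN) / 3 * ((2 * tN + tNoN) / 3 / (tN + tNoN)) := by
            field_simp; ring
  · rintro pN pNoN ⟨hN, hM⟩
    set A := tNoN + pNoN - c with hA
    set B := tN + pN - c with hB
    set a := pN - c with ha
    set b := pNoN - c with hb
    have hN' : ∀ q : ℝ, q * min 1 (max 0 ((A - q) / (tN + tNoN)))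
        ≤ a * min 1 (max 0 ((A - a) / (tN + tNoN))) := by
      intro q
      have := hN (c + q)
      rw [piN_eq, piN_eq] at this
      simpa [hA, ha] using this
    have hM' : ∀ q : ℝ, q * min 1 (max 0 ((B - q) / (tN + tNoN)))
        ≤ b * min 1 (max 0 ((B - b) / (tN + tNoN))) := by
      intro q
      have := hM (c + q)
      rw [piNoN_eq _ _ _ _ _ hT', piNoN_eq _ _ _ _ _ hT'] at this
      simpa [hB, hb] using this
    have hbA : b < A := by rw [hA, hb]; linarith
    have haB : a < B := by rw [hB, ha]; linarith
    have hsum : A + B = (tN + tNoN) + a + b := by rw [hA, hB, ha, hb]; ring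
    have hApos : 0 < A := step_pos hT hsum hbA haB hN' hM'
    have hBpos : 0 < B := by
      refine step_pos hT ?_ haB hbA hM' hN'
      linarith
    -- both equilibrium payoffs are strictly positive
    have hNpos : 0 < a * min 1 (max 0 ((A - a) / (tN + tNoN))) :=
      lt_of_lt_of_le (payoff_pos hT hApos) (hN' (A / 2))
    have hMpos : 0 < b * min 1 (max 0 ((B - b) / (tN + tNoN))) :=
      lt_of_lt_of_le (payoff_pos hT hBpos) (hM' (B / 2))
    have hclA : 0 < min 1 (max 0 ((A - a) / (tN + tNoN))) := by
      rcases (clamp_nonneg ((A - a) / (tN + tNoN))).lt_or_eq with h | h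
      · exact h
      · rw [← h] at hNpos; simp at hNpos
    have hclB : 0 < min 1 (max 0 ((B - b) / (tN + tNoN))) := by
      rcases (clamp_nonneg ((B - b) / (tN + tNoN))).lt_or_eq with h | h
      · exact h
      · rw [← h] at hMpos; simp at hMpos
    have hapos : 0 < a := by
      by_contra h
      push_neg at h
      have := mul_nonpos_of_nonpos_of_nonneg h (clamp_nonneg ((A - a) / (tN + tNoN)))
      linarith
    have hbpos : 0 < b := by
      by_contra h
      push_neg at h
      have := mul_nonpos_of_nonpos_of_nonneg h (clamp_nonneg ((B - b) / (tN + tNoN)))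
      linarith
    -- the two clamp arguments sum to 1
    have hzsum : (B - b) / (tN + tNoN) = 1 - (A - a) / (tN + tNoN) := by
      field_simp
      linarith
    have hclA1 : min 1 (max 0 ((A - a) / (tN + tNoN))) < 1 := by
      rw [hzsum, ← one_sub_clamp] at hclB
      linarith
    have hzA0 : 0 < (A - a) / (tN + tNoN) := pos_of_clamp_pos hclA
    have hzA1 : (A - a) / (tN + tNoN) < 1 := lt_one_of_clamp_lt_one hclA1
    have hzB0 : 0 < (B - b) / (tN + tNoN) := pos_of_clamp_pos hclB
    have hzB1 : (B - b) / (tN + tNoN) < 1 := by rw [hzsum]; linarith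
    have hNkey : 2 * a = A := by
      apply key hT rfl hzA0 hzA1 hapos
      intro q
      have := hN' q
      rwa [clamp_eq_self hzA0 hzA1] at this
    have hMkey : 2 * b = B := by
      apply key hT rfl hzB0 hzB1 hbpos
      intro q
      have := hM' q
      rwa [clamp_eq_self hzB0 hzB1] at this
    rw [ha, hA] at hNkey
    rw [hb, hB] at hMkey
    constructor <;> linarith
end

section
/- In the benchmark neutral pricing game with t_N, t_NoN > 0 and marginal cost c, no price pair (p_N, p_NoN) with p_NoN − p_N ≤ −t_NoN is a Nash equilibrium: for any such pair at least one ISP has a strictly profitable unilateral price deviation. -/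
/-- no price pair with `p_NoN − p_N ≤ −t_NoN` is a Nash equilibrium
of the benchmark neutral pricing game. -/
theorem no_nash_low_deltap
    (tN tNoN c pN pNoN : ℝ) (htN : 0 < tN) (htNoN : 0 < tNoN)
    (h : pNoN - pN ≤ -tNoN) :
    ¬ IsNash tN tNoN c pN pNoN := by
  rintro ⟨hN, hNoN⟩
  have hT : (0:ℝ) < tN + tNoN := by linarith
  have hnu0 : nu tN tNoN pN pNoN = 0 := by
    unfold nu
    have h1 : (tNoN + pNoN - pN) / (tN + tNoN) ≤ 0 :=
      div_nonpos_of_nonpos_of_nonneg (by linarith) hT.le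
    rw [max_eq_left h1, min_eq_right (by norm_num)]
  rcases lt_or_eq_of_le h with hlt | heq
  · -- strict gap: NoN raises price to pN - tNoN, keeping ν = 0
    have hd := hNoN (pN - tNoN)
    have hnu' : nu tN tNoN pN (pN - tNoN) = 0 := by
      unfold nu
      rw [show tNoN + (pN - tNoN) - pN = 0 by ring, zero_div, max_self,
        min_eq_right (by norm_num)]
    rw [piNoN, piNoN, hnu0, hnu'] at hd
    nlinarith
  · -- boundary: pNoN - pN = -tNoN
    rcases lt_or_ge (pNoN - c) (tN + tNoN) with hc | hc
    · -- NoN raises price slightly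
      set ε := min (tN + tNoN) (tN + tNoN - (pNoN - c)) / 2 with hε
      have hε0 : 0 < ε := by
        apply div_pos _ (by norm_num)
        exact lt_min hT (by linarith)
      have hεT : ε < tN + tNoN := by
        have := min_le_left (tN + tNoN) (tN + tNoN - (pNoN - c))
        rw [hε]; linarith
      have hεd : ε < tN + tNoN - (pNoN - c) := by
        have := min_le_right (tN + tNoN) (tN + tNoN - (pNoN - c))
        rw [hε]; linarith
      have hd := hNoN (pNoN + ε)
      have hnu' : nu tN tNoN pN (pNoN + ε) = ε / (tN + tNoN) := by
        unfold nu
        rw [show tNoN + (pNoN + ε) - pN = ε by linarith,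
          max_eq_right (div_nonneg hε0.le hT.le),
          min_eq_right ((div_le_one hT).2 hεT.le)]
      rw [piNoN, piNoN, hnu0, hnu'] at hd
      rw [div_eq_inv_mul] at hd
      have hTi : 0 < (tN + tNoN)⁻¹ := inv_pos.2 hT
      have hkey : (tN + tNoN)⁻¹ * (tN + tNoN) = 1 := inv_mul_cancel₀ hT.ne'
      nlinarith [mul_pos hε0 (show (0:ℝ) < tN + tNoN - (pNoN - c) - ε by linarith),
        mul_pos hTi hε0]
    · -- N lowers price slightly, capturing positive share
      have hpN : 0 < pN - c := by linarith
      set ε := min (tN + tNoN) (pN - c) / 2 with hε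
      have hε0 : 0 < ε := by
        apply div_pos _ (by norm_num)
        exact lt_min hT hpN
      have hεT : ε < tN + tNoN := by
        have := min_le_left (tN + tNoN) (pN - c)
        rw [hε]; linarith
      have hεp : ε < pN - c := by
        have := min_le_right (tN + tNoN) (pN - c)
        rw [hε]; linarith
      have hd := hN (pN - ε)
      have hnu' : nu tN tNoN (pN - ε) pNoN = ε / (tN + tNoN) := by
        unfold nu
        rw [show tNoN + pNoN - (pN - ε) = ε by linarith,
          max_eq_right (div_nonneg hε0.le hT.le),
          min_eq_right ((div_le_one hT).2 hεT.le)]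
      rw [piN, piN, hnu0, hnu'] at hd
      have hpos : 0 < (pN - ε - c) * (ε / (tN + tNoN)) :=
        mul_pos (by linarith) (div_pos hε0 hT)
      nlinarith
end

section
/- In the benchmark neutral pricing game with t_N, t_NoN > 0 and marginal cost c, no price pair (p_N, p_NoN) with p_NoN − p_N ≥ t_N is a Nash equilibrium: for any such pair at least one ISP has a strictly profitable unilateral price deviation. -/
/-- no price pair with `p_NoN − p_N ≥ t_N` is a Nash equilibrium
of the benchmark neutral pricing game. -/
theorem no_nash_high_deltap
    (tN tNoN c pN pNoN : ℝ) (htN : 0 < tN) (htNoN : 0 < tNoN)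
    (h : pNoN - pN ≥ tN) :
    ¬ IsNash tN tNoN c pN pNoN := by
  rintro ⟨hN, hNoN⟩
  have hd : 0 < tN + tNoN := by linarith
  have hnu : nu tN tNoN pN pNoN = 1 := by
    unfold nu
    have hr : (1:ℝ) ≤ (tNoN + pNoN - pN) / (tN + tNoN) := by
      rw [le_div_iff₀ hd]; linarith
    exact min_eq_left (le_max_of_le_right hr)
  rcases lt_or_ge c (pN + tN) with hc | hc
  · -- non-neutral ISP deviates
    set p := (c + pN + tN) / 2 with hp
    have hpc : c < p := by rw [hp]; linarith
    have hplt : p < pN + tN := by rw [hp]; linarith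
    have hnu' : nu tN tNoN pN p < 1 := by
      unfold nu
      have hra : (tNoN + p - pN) / (tN + tNoN) < 1 := by
        rw [div_lt_one hd]; linarith
      exact lt_of_le_of_lt (min_le_right _ _) (max_lt one_pos hra)
    have hpos : 0 < piNoN tN tNoN c pN p := by
      unfold piNoN
      exact mul_pos (by linarith) (by linarith)
    have hpi0 : piNoN tN tNoN c pN pNoN = 0 := by
      unfold piNoN; rw [hnu]; ring
    have := hNoN p
    linarith
  · -- neutral ISP deviates to price c
    have h0 : piN tN tNoN c c pNoN = 0 := by unfold piN; ring
    have h2 : piN tN tNoN c pN pNoN = pN - c := by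
      unfold piN; rw [hnu]; ring
    have := hN c
    rw [h0, h2] at this
    linarith
end

section
/- Assume t_N, t_NoN > 0, κ_u > 0, κ_ad > 0, 0 < q̃_f < q̃_p, and let p̃, Δp be real. Then the CP's payoff Π attains its maximum over the feasible set 𝓕: there exists (q_N*, q_NoN*, z*) ∈ 𝓕 such that Π(q_N*, q_NoN*, z*) ≥ Π(q_N, q_NoN, z) for every (q_N, q_NoN, z) ∈ 𝓕 (note that the z = 1 part of 𝓕 is not closed, so this is not an immediate consequence of compactness). -/
/-- The CP's feasible set `𝓕`: `0 ≤ q_N ≤ q̃_f` and either `z = 0` with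
`0 ≤ q_NoN ≤ q̃_f`, or `z = 1` with `q̃_f < q_NoN ≤ q̃_p`. -/
def Feas (qf qp qN qNoN z : ℝ) : Prop :=
  0 ≤ qN ∧ qN ≤ qf ∧
    ((z = 0 ∧ 0 ≤ qNoN ∧ qNoN ≤ qf) ∨ (z = 1 ∧ qf < qNoN ∧ qNoN ≤ qp))

lemma Pi_cont (tN tNoN κu Δp κad ptilde z : ℝ) :
    Continuous fun p : ℝ × ℝ => Pi tN tNoN κu Δp κad ptilde p.1 p.2 z := by
  unfold Pi nN xN
  fun_prop

lemma nN_mem (tN tNoN κu Δp qN q : ℝ) :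
    nN tN tNoN κu Δp qN q ∈ Set.Icc (0:ℝ) 1 := by
  constructor
  · exact le_min (by norm_num) (le_max_left _ _)
  · exact min_le_left _ _

lemma nN_anti (tN tNoN κu Δp qN q q' : ℝ) (htN : 0 < tN) (htNoN : 0 < tNoN)
    (hκu : 0 < κu) (hqq : q ≤ q') :
    nN tN tNoN κu Δp qN q' ≤ nN tN tNoN κu Δp qN q := by
  unfold nN xN
  have hT : 0 < tN + tNoN := by linarith
  have : (tNoN + κu * (qN - q') + Δp) / (tN + tNoN)
      ≤ (tNoN + κu * (qN - q) + Δp) / (tN + tNoN) := by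
    gcongr
  exact min_le_min le_rfl (max_le_max le_rfl this)

lemma Pi_mono (tN tNoN κu Δp κad ptilde qN q q' : ℝ)
    (htN : 0 < tN) (htNoN : 0 < tNoN) (hκu : 0 < κu) (hκad : 0 < κad)
    (hpt : ptilde ≤ 0) (hqN : qN ≤ q) (hqq : q ≤ q') :
    Pi tN tNoN κu Δp κad ptilde qN q 1 ≤ Pi tN tNoN κu Δp κad ptilde qN q' 1 := by
  have hanti := nN_anti tN tNoN κu Δp qN q q' htN htNoN hκu hqq
  obtain ⟨h0, h1⟩ := nN_mem tN tNoN κu Δp qN q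
  obtain ⟨h0', h1'⟩ := nN_mem tN tNoN κu Δp qN q'
  set n := nN tN tNoN κu Δp qN q
  set n' := nN tN tNoN κu Δp qN q'
  unfold Pi
  nlinarith [mul_nonneg (mul_nonneg hκad.le (sub_nonneg.2 hanti)) (by linarith : (0:ℝ) ≤ q' - qN),
    mul_nonneg (mul_nonneg hκad.le (by linarith : (0:ℝ) ≤ 1 - n)) (by linarith : (0:ℝ) ≤ q' - q),
    mul_nonneg (neg_nonneg.2 hpt) (by linarith : (0:ℝ) ≤ q' - q)]

/-- `Pi` with `z = 1` equals `Pi` with `z = 0` minus the side payment. -/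
lemma Pi_one_eq (tN tNoN κu Δp κad ptilde qN qNoN : ℝ) :
    Pi tN tNoN κu Δp κad ptilde qN qNoN 1
      = Pi tN tNoN κu Δp κad ptilde qN qNoN 0 - ptilde * qNoN := by
  unfold Pi; ring

/-- the CP's payoff attains a maximum over the feasible set `𝓕`
(even though the `z = 1` part of `𝓕` is not closed). -/
theorem CP_max_exists
    (tN tNoN κu κad qf qp ptilde Δp : ℝ)
    (htN : 0 < tN) (htNoN : 0 < tNoN) (hκu : 0 < κu) (hκad : 0 < κad)
    (hqf : 0 < qf) (hq : qf < qp) :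
    ∃ qNs qNoNs zs : ℝ, Feas qf qp qNs qNoNs zs ∧
      ∀ qN qNoN z : ℝ, Feas qf qp qN qNoN z →
        Pi tN tNoN κu Δp κad ptilde qN qNoN z ≤
          Pi tN tNoN κu Δp κad ptilde qNs qNoNs zs := by
  -- maximizer of the z = 0 part over the compact square [0,qf] × [0,qf]
  obtain ⟨p0, hp0, hmax0⟩ :=
    ((isCompact_Icc (a := (0:ℝ)) (b := qf)).prod
      (isCompact_Icc (a := (0:ℝ)) (b := qf))).exists_isMaxOn
      (Set.nonempty_of_mem (Set.mk_mem_prod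
        (Set.left_mem_Icc.2 hqf.le) (Set.left_mem_Icc.2 hqf.le)))
      (Pi_cont tN tNoN κu Δp κad ptilde 0).continuousOn
  rw [isMaxOn_iff] at hmax0
  set M0 := Pi tN tNoN κu Δp κad ptilde p0.1 p0.2 0 with hM0
  obtain ⟨hp01, hp02⟩ := hp0
  by_cases hpt : 0 ≤ ptilde
  · -- side payment nonnegative: compare with the closed z = 1 rectangle
    obtain ⟨p1, hp1, hmax1⟩ :=
      ((isCompact_Icc (a := (0:ℝ)) (b := qf)).prod
        (isCompact_Icc (a := qf) (b := qp))).exists_isMaxOn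
        (Set.nonempty_of_mem (Set.mk_mem_prod
          (Set.left_mem_Icc.2 hqf.le) (Set.left_mem_Icc.2 hq.le)))
        (Pi_cont tN tNoN κu Δp κad ptilde 1).continuousOn
    rw [isMaxOn_iff] at hmax1
    set M1 := Pi tN tNoN κu Δp κad ptilde p1.1 p1.2 1 with hM1
    obtain ⟨hp11, hp12⟩ := hp1
    by_cases hcmp : M1 ≤ M0
    · -- the z = 0 maximizer is a global maximizer
      refine ⟨p0.1, p0.2, 0, ⟨hp01.1, hp01.2, Or.inl ⟨rfl, hp02.1, hp02.2⟩⟩, ?_⟩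
      rintro qN qNoN z ⟨h1, h2, h3 | h3⟩
      · rw [h3.1]
        exact hmax0 (qN, qNoN) (Set.mk_mem_prod ⟨h1, h2⟩ ⟨h3.2.1, h3.2.2⟩)
      · rw [h3.1]
        calc Pi tN tNoN κu Δp κad ptilde qN qNoN 1
            ≤ M1 := hmax1 (qN, qNoN) (Set.mk_mem_prod ⟨h1, h2⟩ ⟨h3.2.1.le, h3.2.2⟩)
          _ ≤ M0 := hcmp
    · -- M1 > M0 : the maximizer of the z = 1 part cannot sit at qNoN = qf
      push_neg at hcmp
      have hne : qf < p1.2 := by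
        rcases lt_or_eq_of_le hp12.1 with h | h
        · exact h
        · exfalso
          have hval : Pi tN tNoN κu Δp κad ptilde p1.1 qf 0 ≤ M0 :=
            hmax0 (p1.1, qf) (Set.mk_mem_prod ⟨hp11.1, hp11.2⟩ ⟨hqf.le, le_rfl⟩)
          have heq := Pi_one_eq tN tNoN κu Δp κad ptilde p1.1 qf
          have hnn : 0 ≤ ptilde * qf := mul_nonneg hpt hqf.le
          have hM1' : M1 = Pi tN tNoN κu Δp κad ptilde p1.1 qf 1 := by
            rw [hM1, ← h]
          linarith
      refine ⟨p1.1, p1.2, 1, ⟨hp11.1, hp11.2, Or.inr ⟨rfl, hne, hp12.2⟩⟩, ?_⟩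
      rintro qN qNoN z ⟨h1, h2, h3 | h3⟩
      · rw [h3.1]
        calc Pi tN tNoN κu Δp κad ptilde qN qNoN 0
            ≤ M0 := hmax0 (qN, qNoN) (Set.mk_mem_prod ⟨h1, h2⟩ ⟨h3.2.1, h3.2.2⟩)
          _ ≤ M1 := hcmp.le
      · rw [h3.1]
        exact hmax1 (qN, qNoN) (Set.mk_mem_prod ⟨h1, h2⟩ ⟨h3.2.1.le, h3.2.2⟩)
  · -- side payment negative: Pi(·, ·, 1) is nondecreasing in qNoN, so qNoN = qp is best
    push_neg at hpt
    have hgc : Continuous (fun a : ℝ => Pi tN tNoN κu Δp κad ptilde a qp 1) := by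
      unfold Pi nN xN
      fun_prop
    obtain ⟨a1, ha1, hmaxa⟩ :=
      (isCompact_Icc (a := (0:ℝ)) (b := qf)).exists_isMaxOn
        (Set.nonempty_Icc.2 hqf.le) hgc.continuousOn
    rw [isMaxOn_iff] at hmaxa
    set M1 := Pi tN tNoN κu Δp κad ptilde a1 qp 1 with hM1
    have key : ∀ qN qNoN : ℝ, 0 ≤ qN → qN ≤ qf → qf < qNoN → qNoN ≤ qp →
        Pi tN tNoN κu Δp κad ptilde qN qNoN 1 ≤ M1 := by
      intro qN qNoN h1 h2 h3 h4
      calc Pi tN tNoN κu Δp κad ptilde qN qNoN 1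
          ≤ Pi tN tNoN κu Δp κad ptilde qN qp 1 :=
            Pi_mono tN tNoN κu Δp κad ptilde qN qNoN qp htN htNoN hκu hκad hpt.le
              (by linarith) h4
        _ ≤ M1 := hmaxa qN ⟨h1, h2⟩
    by_cases hcmp : M1 ≤ M0
    · refine ⟨p0.1, p0.2, 0, ⟨hp01.1, hp01.2, Or.inl ⟨rfl, hp02.1, hp02.2⟩⟩, ?_⟩
      rintro qN qNoN z ⟨h1, h2, h3 | h3⟩
      · rw [h3.1]
        exact hmax0 (qN, qNoN) (Set.mk_mem_prod ⟨h1, h2⟩ ⟨h3.2.1, h3.2.2⟩)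
      · rw [h3.1]
        exact le_trans (key qN qNoN h1 h2 h3.2.1 h3.2.2) hcmp
    · push_neg at hcmp
      refine ⟨a1, qp, 1, ⟨ha1.1, ha1.2, Or.inr ⟨rfl, hq, le_rfl⟩⟩, ?_⟩
      rintro qN qNoN z ⟨h1, h2, h3 | h3⟩
      · rw [h3.1]
        exact le_trans (hmax0 (qN, qNoN)
          (Set.mk_mem_prod ⟨h1, h2⟩ ⟨h3.2.1, h3.2.2⟩)) hcmp.le
      · rw [h3.1]
        exact key qN qNoN h1 h2 h3.2.1 h3.2.2
end

section
/- Assume t_N, t_NoN > 0, κ_u > 0, κ_ad > 0, 0 < q̃_f < q̃_p, and let p̃, Δp be real. If (q_N*, q_NoN*, z*) maximizes Π over the feasible set 𝓕, then n_NoN(q_N*, q_NoN*)·κ_ad − z*·p̃ ≥ 0, where z* is interpreted as 0 or 1. -/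
/-- at any maximizer of the CP's payoff over `𝓕`, one has
`n_NoN κ_ad − z* p̃ ≥ 0`. -/
theorem CP_max_side_payment_sign
    (tN tNoN κu κad qf qp ptilde Δp : ℝ)
    (htN : 0 < tN) (htNoN : 0 < tNoN) (hκu : 0 < κu) (hκad : 0 < κad)
    (hqf : 0 < qf) (hq : qf < qp)
    (qNs qNoNs zs : ℝ) (hfeas : Feas qf qp qNs qNoNs zs)
    (hmax : ∀ qN qNoN z : ℝ, Feas qf qp qN qNoN z →
      Pi tN tNoN κu Δp κad ptilde qN qNoN z ≤
        Pi tN tNoN κu Δp κad ptilde qNs qNoNs zs) :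
    (1 - nN tN tNoN κu Δp qNs qNoNs) * κad - zs * ptilde ≥ 0 := by
  obtain ⟨hqN0, hqNf, hcase⟩ := hfeas
  rcases hcase with ⟨hz, _, _⟩ | ⟨hz, hlt, hle⟩
  · subst hz
    have h1 : nN tN tNoN κu Δp qNs qNoNs ≤ 1 := min_le_left _ _
    nlinarith
  · subst hz
    have hfeas0 : Feas qf qp qNs 0 0 := ⟨hqN0, hqNf, Or.inl ⟨rfl, le_refl 0, hqf.le⟩⟩
    have hP := hmax qNs 0 0 hfeas0
    have hT : 0 < tN + tNoN := by linarith
    have hqNoN0 : 0 < qNoNs := lt_trans hqf hlt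
    have hx : xN tN tNoN κu Δp qNs qNoNs ≤ xN tN tNoN κu Δp qNs 0 := by
      unfold xN
      apply div_le_div_of_nonneg_right _ hT.le
      nlinarith
    have hn : nN tN tNoN κu Δp qNs qNoNs ≤ nN tN tNoN κu Δp qNs 0 := by
      unfold nN
      exact min_le_min le_rfl (max_le_max le_rfl hx)
    unfold Pi at hP
    set n := nN tN tNoN κu Δp qNs qNoNs with hndef
    set n0 := nN tN tNoN κu Δp qNs 0 with hn0def
    nlinarith [mul_nonneg (mul_nonneg (sub_nonneg.2 hn) hκad.le) hqN0]
end

section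
/- Assume t_N, t_NoN > 0, κ_u > 0, κ_ad > 0, 0 < q̃_f < q̃_p, and let p̃, Δp be real. If (q_N*, q_NoN*, z*) maximizes Π over the feasible set 𝓕, then the CP offers a threshold quality on at least one ISP: q_N* = q̃_f, or (z* = 0 and q_NoN* = q̃_f), or (z* = 1 and q_NoN* = q̃_p). -/
/-- Shifting both qualities by the same amount leaves `nN` unchanged. -/
lemma nN_shift (tN tNoN κu Δp qN qNoN ε : ℝ) :
    nN tN tNoN κu Δp (qN + ε) (qNoN + ε) = nN tN tNoN κu Δp qN qNoN := by
  have hx : xN tN tNoN κu Δp (qN + ε) (qNoN + ε) = xN tN tNoN κu Δp qN qNoN := by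
    unfold xN; ring_nf
  unfold nN; rw [hx]

/-- Payoff after a joint shift of both qualities. -/
lemma Pi_shift (tN tNoN κu Δp κad ptilde qN qNoN z ε : ℝ) :
    Pi tN tNoN κu Δp κad ptilde (qN + ε) (qNoN + ε) z
      = Pi tN tNoN κu Δp κad ptilde qN qNoN z + ε * (κad - z * ptilde) := by
  unfold Pi
  rw [nN_shift]
  ring

lemma nN_eq_xN (tN tNoN κu Δp qN qNoN : ℝ)
    (h0 : 0 ≤ xN tN tNoN κu Δp qN qNoN) (h1 : xN tN tNoN κu Δp qN qNoN ≤ 1) :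
    nN tN tNoN κu Δp qN qNoN = xN tN tNoN κu Δp qN qNoN := by
  unfold nN; rw [max_eq_right h0, min_eq_right h1]

lemma nN_eq_one (tN tNoN κu Δp qN qNoN : ℝ)
    (h1 : 1 ≤ xN tN tNoN κu Δp qN qNoN) :
    nN tN tNoN κu Δp qN qNoN = 1 := by
  unfold nN
  rw [max_eq_right (le_trans zero_le_one h1), min_eq_left h1]

lemma nN_eq_zero (tN tNoN κu Δp qN qNoN : ℝ)
    (h0 : xN tN tNoN κu Δp qN qNoN ≤ 0) :
    nN tN tNoN κu Δp qN qNoN = 0 := by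
  unfold nN
  rw [max_eq_left h0, min_eq_right zero_le_one]

/-- at any maximizer of the CP's payoff over `𝓕`, the CP offers a
threshold quality on at least one ISP. -/
theorem CP_max_threshold_quality
    (tN tNoN κu κad qf qp ptilde Δp : ℝ)
    (htN : 0 < tN) (htNoN : 0 < tNoN) (hκu : 0 < κu) (hκad : 0 < κad)
    (hqf : 0 < qf) (hq : qf < qp)
    (qNs qNoNs zs : ℝ) (hfeas : Feas qf qp qNs qNoNs zs)
    (hmax : ∀ qN qNoN z : ℝ, Feas qf qp qN qNoN z →
      Pi tN tNoN κu Δp κad ptilde qN qNoN z ≤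
        Pi tN tNoN κu Δp κad ptilde qNs qNoNs zs) :
    qNs = qf ∨ (zs = 0 ∧ qNoNs = qf) ∨ (zs = 1 ∧ qNoNs = qp) := by
  by_contra hcon
  push_neg at hcon
  obtain ⟨hne, hc0, hc1⟩ := hcon
  obtain ⟨hqN0, hqNf, hcase⟩ := hfeas
  have hqNlt : qNs < qf := lt_of_le_of_ne hqNf hne
  have hT0 : (0:ℝ) < tN + tNoN := by linarith
  rcases hcase with ⟨hz0, hqn0, hqnf⟩ | ⟨hz1, hqngt, hqnp⟩
  · -- z = 0 : shift both qualities up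
    have hqnlt : qNoNs < qf := lt_of_le_of_ne hqnf (hc0 hz0)
    set ε := min (qf - qNs) (qf - qNoNs) with hε
    have hε0 : 0 < ε := lt_min (by linarith) (by linarith)
    have hfeas' : Feas qf qp (qNs + ε) (qNoNs + ε) zs := by
      refine ⟨by linarith, ?_, Or.inl ⟨hz0, by linarith, ?_⟩⟩
      · have := min_le_left (qf - qNs) (qf - qNoNs); linarith
      · have := min_le_right (qf - qNs) (qf - qNoNs); linarith
    have := hmax _ _ _ hfeas'
    rw [Pi_shift] at this
    rw [hz0] at this
    nlinarith
  · -- z = 1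
    have hqnlt : qNoNs < qp := lt_of_le_of_ne hqnp (hc1 hz1)
    rcases lt_or_ge ptilde κad with hpt | hpt
    · -- ptilde < κad : shift both qualities up
      set ε := min (qf - qNs) (qp - qNoNs) with hε
      have hε0 : 0 < ε := lt_min (by linarith) (by linarith)
      have hfeas' : Feas qf qp (qNs + ε) (qNoNs + ε) zs := by
        refine ⟨by linarith, ?_, Or.inr ⟨hz1, by linarith, ?_⟩⟩
        · have := min_le_left (qf - qNs) (qp - qNoNs); linarith
        · have := min_le_right (qf - qNs) (qp - qNoNs); linarith
      have := hmax _ _ _ hfeas'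
      rw [Pi_shift] at this
      rw [hz1] at this
      nlinarith
    · -- κad ≤ ptilde
      have hpt0 : 0 < ptilde := lt_of_lt_of_le hκad hpt
      have hxlin : ∀ y : ℝ, xN tN tNoN κu Δp qNs y
          = xN tN tNoN κu Δp qNs qNoNs + (κu / (tN + tNoN)) * (qNoNs - y) := by
        intro y
        unfold xN
        field_simp
        ring
      set xs := xN tN tNoN κu Δp qNs qNoNs with hxs
      set b := κu / (tN + tNoN) with hbdef
      have hb : 0 < b := div_pos hκu hT0
      clear_value xs b
      clear hbdef
      rcases le_or_gt xs 0 with hx0 | hx0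
      · -- nN = 0 : payoff ≤ 0 < κad * qf
        have hn0 : nN tN tNoN κu Δp qNs qNoNs = 0 :=
          nN_eq_zero _ _ _ _ _ _ (by rw [← hxs]; exact hx0)
        have hfeas' : Feas qf qp qf qf 0 :=
          ⟨le_of_lt hqf, le_refl _, Or.inl ⟨rfl, le_of_lt hqf, le_refl _⟩⟩
        have hle := hmax _ _ _ hfeas'
        unfold Pi at hle
        rw [hn0, hz1] at hle
        have hval : nN tN tNoN κu Δp qf qf * κad * qf
            + (1 - nN tN tNoN κu Δp qf qf) * κad * qf - 0 * ptilde * qf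
            = κad * qf := by ring
        rw [hval] at hle
        nlinarith
      · rcases le_or_gt 1 xs with hx1 | hx1
        · -- nN = 1 : lower qNoN to save side payment
          have hn1 : nN tN tNoN κu Δp qNs qNoNs = 1 :=
            nN_eq_one _ _ _ _ _ _ (by rw [← hxs]; exact hx1)
          set y := (qf + qNoNs) / 2 with hy
          have hylt : y < qNoNs := by rw [hy]; linarith
          have hygt : qf < y := by rw [hy]; linarith
          have hfeas' : Feas qf qp qNs y 1 :=
            ⟨hqN0, hqNf, Or.inr ⟨rfl, hygt, by linarith⟩⟩
          have hxy : 1 ≤ xN tN tNoN κu Δp qNs y := by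
            rw [hxlin y]
            nlinarith
          have hny : nN tN tNoN κu Δp qNs y = 1 := nN_eq_one _ _ _ _ _ _ hxy
          have hle := hmax _ _ _ hfeas'
          unfold Pi at hle
          rw [hn1, hny, hz1] at hle
          nlinarith
        · -- 0 < xs < 1 : strict convexity in qNoN
          set δ := min (min ((qNoNs - qf) / 2) ((qp - qNoNs) / 2))
              (min (xs / b) ((1 - xs) / b)) with hδdef
          have hδ0 : 0 < δ := by
            apply lt_min
            · exact lt_min (by linarith) (by linarith)
            · exact lt_min (div_pos hx0 hb) (div_pos (by linarith) hb)
          have hδ1 : δ ≤ (qNoNs - qf) / 2 :=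
            le_trans (min_le_left _ _) (min_le_left _ _)
          have hδ2 : δ ≤ (qp - qNoNs) / 2 :=
            le_trans (min_le_left _ _) (min_le_right _ _)
          have hbδ : 0 < b * δ := mul_pos hb hδ0
          have hδ3 : b * δ ≤ xs := by
            have h : δ ≤ xs / b := min_le_of_right_le (min_le_left _ _)
            rw [le_div_iff₀ hb] at h
            linarith
          have hδ4 : b * δ ≤ 1 - xs := by
            have h : δ ≤ (1 - xs) / b := min_le_of_right_le (min_le_right _ _)
            rw [le_div_iff₀ hb] at h
            linarith
          -- payoff at the optimum via xs
          clear_value δ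
          clear hδdef
          have hns : nN tN tNoN κu Δp qNs qNoNs = xs := by
            rw [nN_eq_xN _ _ _ _ _ _ (by rw [← hxs]; linarith) (by rw [← hxs]; linarith)]
            exact hxs.symm
          -- the two perturbed points
          have hxp : xN tN tNoN κu Δp qNs (qNoNs + δ) = xs - b * δ := by
            rw [hxlin]; ring
          have hxm : xN tN tNoN κu Δp qNs (qNoNs - δ) = xs + b * δ := by
            rw [hxlin]; ring
          have hnp : nN tN tNoN κu Δp qNs (qNoNs + δ) = xs - b * δ := by
            rw [nN_eq_xN _ _ _ _ _ _ (by rw [hxp]; linarith) (by rw [hxp]; linarith), hxp]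
          have hnm : nN tN tNoN κu Δp qNs (qNoNs - δ) = xs + b * δ := by
            rw [nN_eq_xN _ _ _ _ _ _ (by rw [hxm]; linarith) (by rw [hxm]; linarith), hxm]
          have hfp : Feas qf qp qNs (qNoNs + δ) 1 :=
            ⟨hqN0, hqNf, Or.inr ⟨rfl, by linarith, by linarith⟩⟩
          have hfm : Feas qf qp qNs (qNoNs - δ) 1 :=
            ⟨hqN0, hqNf, Or.inr ⟨rfl, by linarith, by linarith⟩⟩
          have hlep := hmax _ _ _ hfp
          have hlem := hmax _ _ _ hfm
          unfold Pi at hlep hlem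
          rw [hnp, hns, hz1] at hlep
          rw [hnm, hns, hz1] at hlem
          nlinarith [mul_pos (mul_pos hκad hb) (mul_pos hδ0 hδ0)]
end

section
/- Assume t_N, t_NoN > 0, κ_u > 0, κ_ad > 0, 0 < q̃_f < q̃_p, and let p̃, Δp be real. If (q_N*, q_NoN*, z*) maximizes Π over the feasible set 𝓕 and 0 < x_N(q_N*, q_NoN*) < 1, then q_N* ∈ {0, q̃_f}, q_NoN* ∈ {0, q̃_f, q̃_p}, and (q_N*, q_NoN*) ≠ (0, 0). In other words, an interior optimum of the continuous-quality problem always lies in the discrete candidate set. -/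
lemma xN_shiftN (tN tNoN κu Δp qN qNoN d : ℝ) (hT : tN + tNoN ≠ 0) :
    xN tN tNoN κu Δp (qN + d) qNoN
      = xN tN tNoN κu Δp qN qNoN + κu / (tN + tNoN) * d := by
  unfold xN; field_simp; ring

lemma xN_shiftNoN (tN tNoN κu Δp qN qNoN d : ℝ) (hT : tN + tNoN ≠ 0) :
    xN tN tNoN κu Δp qN (qNoN + d)
      = xN tN tNoN κu Δp qN qNoN - κu / (tN + tNoN) * d := by
  unfold xN; field_simp; ring

lemma Pi_eq (tN tNoN κu Δp κad ptilde qN qNoN z : ℝ)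
    (h0 : 0 ≤ xN tN tNoN κu Δp qN qNoN) (h1 : xN tN tNoN κu Δp qN qNoN ≤ 1) :
    Pi tN tNoN κu Δp κad ptilde qN qNoN z =
      xN tN tNoN κu Δp qN qNoN * κad * qN
        + (1 - xN tN tNoN κu Δp qN qNoN) * κad * qNoN - z * ptilde * qNoN := by
  rw [Pi, nN, max_eq_right h0, min_eq_right h1]

/-- an interior maximizer of the CP's continuous-quality problem lies
in the discrete candidate set: `q_N* ∈ {0, q̃_f}`, `q_NoN* ∈ {0, q̃_f, q̃_p}`, and
`(q_N*, q_NoN*) ≠ (0, 0)`. -/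
theorem CP_interior_max_discrete
    (tN tNoN κu κad qf qp ptilde Δp : ℝ)
    (htN : 0 < tN) (htNoN : 0 < tNoN) (hκu : 0 < κu) (hκad : 0 < κad)
    (hqf : 0 < qf) (hq : qf < qp)
    (qNs qNoNs zs : ℝ) (hfeas : Feas qf qp qNs qNoNs zs)
    (hmax : ∀ qN qNoN z : ℝ, Feas qf qp qN qNoN z →
      Pi tN tNoN κu Δp κad ptilde qN qNoN z ≤
        Pi tN tNoN κu Δp κad ptilde qNs qNoNs zs)
    (hx1 : 0 < xN tN tNoN κu Δp qNs qNoNs)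
    (hx2 : xN tN tNoN κu Δp qNs qNoNs < 1) :
    qNs ∈ ({0, qf} : Set ℝ) ∧ qNoNs ∈ ({0, qf, qp} : Set ℝ) ∧
      (qNs, qNoNs) ≠ ((0 : ℝ), (0 : ℝ)) := by
  obtain ⟨hq0, hqle, hz⟩ := hfeas
  have hT : (0:ℝ) < tN + tNoN := by linarith
  have hTne : tN + tNoN ≠ 0 := ne_of_gt hT
  set x₀ := xN tN tNoN κu Δp qNs qNoNs with hx0def
  set a := κu / (tN + tNoN) with hadef
  have ha : 0 < a := div_pos hκu hT
  -- Claim A : qNs ∈ {0, qf}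
  have hA : qNs = 0 ∨ qNs = qf := by
    by_contra hc
    push_neg at hc
    have h0 : 0 < qNs := lt_of_le_of_ne hq0 (Ne.symm hc.1)
    have h1 : qNs < qf := lt_of_le_of_ne hqle hc.2
    set ε := min (min qNs (qf - qNs)) (min (x₀ / a) ((1 - x₀) / a)) with hεdef
    have hε : 0 < ε :=
      lt_min (lt_min h0 (by linarith))
        (lt_min (div_pos hx1 ha) (div_pos (by linarith) ha))
    have e1 : ε ≤ qNs := le_trans (min_le_left _ _) (min_le_left _ _)
    have e2 : ε ≤ qf - qNs := le_trans (min_le_left _ _) (min_le_right _ _)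
    have e3 : a * ε ≤ x₀ := by
      have h := le_trans (min_le_right (min qNs (qf - qNs)) _)
        (min_le_left (x₀ / a) ((1 - x₀) / a))
      have := (le_div_iff₀ ha).mp h
      linarith
    have e4 : a * ε ≤ 1 - x₀ := by
      have h := le_trans (min_le_right (min qNs (qf - qNs)) _)
        (min_le_right (x₀ / a) ((1 - x₀) / a))
      have := (le_div_iff₀ ha).mp h
      linarith
    have haε : 0 ≤ a * ε := mul_nonneg ha.le hε.le
    have hxp : xN tN tNoN κu Δp (qNs + ε) qNoNs = x₀ + a * ε := by
      rw [xN_shiftN tN tNoN κu Δp qNs qNoNs ε hTne]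
    have hxm : xN tN tNoN κu Δp (qNs - ε) qNoNs = x₀ - a * ε := by
      rw [show qNs - ε = qNs + (-ε) by ring,
        xN_shiftN tN tNoN κu Δp qNs qNoNs (-ε) hTne]; ring
    have hf1 : Feas qf qp (qNs + ε) qNoNs zs := ⟨by linarith, by linarith, hz⟩
    have hf2 : Feas qf qp (qNs - ε) qNoNs zs := ⟨by linarith, by linarith, hz⟩
    have h1' := hmax _ _ _ hf1
    have h2' := hmax _ _ _ hf2
    rw [Pi_eq tN tNoN κu Δp κad ptilde (qNs + ε) qNoNs zs
        (by rw [hxp]; linarith) (by rw [hxp]; linarith),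
      Pi_eq tN tNoN κu Δp κad ptilde qNs qNoNs zs hx1.le hx2.le, hxp] at h1'
    rw [Pi_eq tN tNoN κu Δp κad ptilde (qNs - ε) qNoNs zs
        (by rw [hxm]; linarith) (by rw [hxm]; linarith),
      Pi_eq tN tNoN κu Δp κad ptilde qNs qNoNs zs hx1.le hx2.le, hxm] at h2'
    nlinarith [h1', h2', mul_pos (mul_pos hκad ha) (mul_pos hε hε)]
  -- Claim B : qNoNs ∈ {0, qf, qp}
  have hB : qNoNs = 0 ∨ qNoNs = qf ∨ qNoNs = qp := by
    rcases hz with ⟨hz0, hc0, hcf⟩ | ⟨hz1, hcf, hcp⟩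
    · -- z = 0 case: qNoNs ∈ {0, qf}
      by_contra hc
      push_neg at hc
      have h0 : 0 < qNoNs := lt_of_le_of_ne hc0 (Ne.symm hc.1)
      have h1 : qNoNs < qf := lt_of_le_of_ne hcf hc.2.1
      set ε := min (min qNoNs (qf - qNoNs)) (min (x₀ / a) ((1 - x₀) / a)) with hεdef
      have hε : 0 < ε :=
        lt_min (lt_min h0 (by linarith))
          (lt_min (div_pos hx1 ha) (div_pos (by linarith) ha))
      have e1 : ε ≤ qNoNs := le_trans (min_le_left _ _) (min_le_left _ _)
      have e2 : ε ≤ qf - qNoNs := le_trans (min_le_left _ _) (min_le_right _ _)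
      have e3 : a * ε ≤ x₀ := by
        have h := le_trans (min_le_right (min qNoNs (qf - qNoNs)) _)
          (min_le_left (x₀ / a) ((1 - x₀) / a))
        have := (le_div_iff₀ ha).mp h
        linarith
      have e4 : a * ε ≤ 1 - x₀ := by
        have h := le_trans (min_le_right (min qNoNs (qf - qNoNs)) _)
          (min_le_right (x₀ / a) ((1 - x₀) / a))
        have := (le_div_iff₀ ha).mp h
        linarith
      have haε : 0 ≤ a * ε := mul_nonneg ha.le hε.le
      have hxp : xN tN tNoN κu Δp qNs (qNoNs + ε) = x₀ - a * ε := by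
        rw [xN_shiftNoN tN tNoN κu Δp qNs qNoNs ε hTne]
      have hxm : xN tN tNoN κu Δp qNs (qNoNs - ε) = x₀ + a * ε := by
        rw [show qNoNs - ε = qNoNs + (-ε) by ring,
          xN_shiftNoN tN tNoN κu Δp qNs qNoNs (-ε) hTne]; ring
      have hf1 : Feas qf qp qNs (qNoNs + ε) zs :=
        ⟨hq0, hqle, Or.inl ⟨hz0, by linarith, by linarith⟩⟩
      have hf2 : Feas qf qp qNs (qNoNs - ε) zs :=
        ⟨hq0, hqle, Or.inl ⟨hz0, by linarith, by linarith⟩⟩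
      have h1' := hmax _ _ _ hf1
      have h2' := hmax _ _ _ hf2
      rw [Pi_eq tN tNoN κu Δp κad ptilde qNs (qNoNs + ε) zs
          (by rw [hxp]; linarith) (by rw [hxp]; linarith),
        Pi_eq tN tNoN κu Δp κad ptilde qNs qNoNs zs hx1.le hx2.le, hxp] at h1'
      rw [Pi_eq tN tNoN κu Δp κad ptilde qNs (qNoNs - ε) zs
          (by rw [hxm]; linarith) (by rw [hxm]; linarith),
        Pi_eq tN tNoN κu Δp κad ptilde qNs qNoNs zs hx1.le hx2.le, hxm] at h2'
      nlinarith [h1', h2', mul_pos (mul_pos hκad ha) (mul_pos hε hε)]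
    · -- z = 1 case: qNoNs = qp
      right; right
      by_contra hc
      have h1 : qNoNs < qp := lt_of_le_of_ne hcp hc
      set ε := min (min ((qNoNs - qf) / 2) (qp - qNoNs)) (min (x₀ / a) ((1 - x₀) / a))
        with hεdef
      have hε : 0 < ε :=
        lt_min (lt_min (by linarith) (by linarith))
          (lt_min (div_pos hx1 ha) (div_pos (by linarith) ha))
      have e1 : ε ≤ (qNoNs - qf) / 2 := le_trans (min_le_left _ _) (min_le_left _ _)
      have e2 : ε ≤ qp - qNoNs := le_trans (min_le_left _ _) (min_le_right _ _)
      have e3 : a * ε ≤ x₀ := by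
        have h := le_trans (min_le_right (min ((qNoNs - qf) / 2) (qp - qNoNs)) _)
          (min_le_left (x₀ / a) ((1 - x₀) / a))
        have := (le_div_iff₀ ha).mp h
        linarith
      have e4 : a * ε ≤ 1 - x₀ := by
        have h := le_trans (min_le_right (min ((qNoNs - qf) / 2) (qp - qNoNs)) _)
          (min_le_right (x₀ / a) ((1 - x₀) / a))
        have := (le_div_iff₀ ha).mp h
        linarith
      have haε : 0 ≤ a * ε := mul_nonneg ha.le hε.le
      have hxp : xN tN tNoN κu Δp qNs (qNoNs + ε) = x₀ - a * ε := by
        rw [xN_shiftNoN tN tNoN κu Δp qNs qNoNs ε hTne]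
      have hxm : xN tN tNoN κu Δp qNs (qNoNs - ε) = x₀ + a * ε := by
        rw [show qNoNs - ε = qNoNs + (-ε) by ring,
          xN_shiftNoN tN tNoN κu Δp qNs qNoNs (-ε) hTne]; ring
      have hf1 : Feas qf qp qNs (qNoNs + ε) zs :=
        ⟨hq0, hqle, Or.inr ⟨hz1, by linarith, by linarith⟩⟩
      have hf2 : Feas qf qp qNs (qNoNs - ε) zs :=
        ⟨hq0, hqle, Or.inr ⟨hz1, by linarith, by linarith⟩⟩
      have h1' := hmax _ _ _ hf1
      have h2' := hmax _ _ _ hf2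
      rw [Pi_eq tN tNoN κu Δp κad ptilde qNs (qNoNs + ε) zs
          (by rw [hxp]; linarith) (by rw [hxp]; linarith),
        Pi_eq tN tNoN κu Δp κad ptilde qNs qNoNs zs hx1.le hx2.le, hxp] at h1'
      rw [Pi_eq tN tNoN κu Δp κad ptilde qNs (qNoNs - ε) zs
          (by rw [hxm]; linarith) (by rw [hxm]; linarith),
        Pi_eq tN tNoN κu Δp κad ptilde qNs qNoNs zs hx1.le hx2.le, hxm] at h2'
      nlinarith [h1', h2', mul_pos (mul_pos hκad ha) (mul_pos hε hε)]
  -- Claim C : not both zero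
  have hC : ¬ (qNs = 0 ∧ qNoNs = 0) := by
    rintro ⟨rfl, rfl⟩
    have hx' : 0 < xN tN tNoN κu Δp qf 0 := by
      have h := xN_shiftN tN tNoN κu Δp 0 0 qf hTne
      rw [show (0:ℝ) + qf = qf by ring] at h
      rw [h]
      have : 0 < a * qf := mul_pos ha hqf
      linarith
    have hn : 0 < nN tN tNoN κu Δp qf 0 := by
      rw [nN]
      exact lt_min one_pos (lt_max_iff.mpr (Or.inr hx'))
    have hf : Feas qf qp qf 0 0 :=
      ⟨hqf.le, le_refl qf, Or.inl ⟨rfl, le_refl 0, hqf.le⟩⟩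
    have h := hmax qf 0 0 hf
    have hz0 : Pi tN tNoN κu Δp κad ptilde 0 0 zs = 0 := by simp [Pi]
    have hp : Pi tN tNoN κu Δp κad ptilde qf 0 0
        = nN tN tNoN κu Δp qf 0 * κad * qf := by simp [Pi]
    rw [hz0, hp] at h
    nlinarith [mul_pos (mul_pos hn hκad) hqf]
  refine ⟨?_, ?_, ?_⟩
  · simpa [Set.mem_insert_iff] using hA
  · simpa [Set.mem_insert_iff] using hB
  · intro h
    rw [Prod.mk.injEq] at h
    exact hC h
end

section
/- Assume t_N, t_NoN > 0, κ_u > 0, κ_ad > 0, 0 < q̃_f < q̃_p, and let p̃, Δp be real. (1) If (q_N*, q_NoN*, z*) maximizes Π over the feasible set 𝓕 and x_N(q_N*, q_NoN*) ≤ 0, then q_NoN* = q̃_f when z* = 0 and q_NoN* = q̃_p when z* = 1. (2) If Δp ≤ κ_u·q̃_f − t_NoN, then for every q_N with 0 ≤ q_N ≤ q̃_f and q_N ≤ (κ_u·q̃_f − t_NoN − Δp)/κ_u, the point (q_N, q̃_f) satisfies x_N(q_N, q̃_f) ≤ 0 and Π(q_N, q̃_f, 0) ≥ Π(q_N', q_NoN',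 0) for every feasible triple (q_N', q_NoN', 0) ∈ 𝓕 with x_N(q_N', q_NoN') ≤ 0. (3) If p̃ ≤ κ_ad and Δp ≤ κ_u·q̃_p − t_NoN, then for every q_N with 0 ≤ q_N ≤ q̃_f and q_N ≤ (κ_u·q̃_p − t_NoN − Δp)/κ_u, the point (q_N, q̃_p) satisfies x_N(q_N, q̃_p) ≤ 0 and Π(q_N, q̃_p, 1) ≥ Π(q_N', q_NoN', 1) for every feasible triple (q_N', q_NoN', 1) ∈ 𝓕 with x_N(q_N', q_NoN') ≤ 0. -/
/-- Lemma on `F^L`: (1) at a maximizer with `x_N ≤ 0`, the non-neutral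
quality is at its cap (`q̃_f` if `z* = 0`, `q̃_p` if `z* = 1`); (2) if
`Δp ≤ κ_u q̃_f − t_NoN`, every `(q_N, q̃_f)` with `0 ≤ q_N ≤ q̃_f` and
`q_N ≤ (κ_u q̃_f − t_NoN − Δp)/κ_u` lies in `F^L_0` and is optimal there; (3) if
`p̃ ≤ κ_ad` and `Δp ≤ κ_u q̃_p − t_NoN`, every `(q_N, q̃_p)` with `0 ≤ q_N ≤ q̃_f` and
`q_N ≤ (κ_u q̃_p − t_NoN − Δp)/κ_u` lies in `F^L_1` and is optimal there. -/
theorem CP_lower_region_optima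
    (tN tNoN κu κad qf qp ptilde Δp : ℝ)
    (htN : 0 < tN) (htNoN : 0 < tNoN) (hκu : 0 < κu) (hκad : 0 < κad)
    (hqf : 0 < qf) (hq : qf < qp) :
    (∀ qNs qNoNs zs : ℝ, Feas qf qp qNs qNoNs zs →
      (∀ qN qNoN z : ℝ, Feas qf qp qN qNoN z →
        Pi tN tNoN κu Δp κad ptilde qN qNoN z ≤
          Pi tN tNoN κu Δp κad ptilde qNs qNoNs zs) →
      xN tN tNoN κu Δp qNs qNoNs ≤ 0 →
      (zs = 0 → qNoNs = qf) ∧ (zs = 1 → qNoNs = qp)) ∧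
    (Δp ≤ κu * qf - tNoN →
      ∀ qN : ℝ, 0 ≤ qN → qN ≤ qf → qN ≤ (κu * qf - tNoN - Δp) / κu →
        xN tN tNoN κu Δp qN qf ≤ 0 ∧
        ∀ qN' qNoN' : ℝ, Feas qf qp qN' qNoN' 0 →
          xN tN tNoN κu Δp qN' qNoN' ≤ 0 →
          Pi tN tNoN κu Δp κad ptilde qN' qNoN' 0 ≤
            Pi tN tNoN κu Δp κad ptilde qN qf 0) ∧
    (ptilde ≤ κad → Δp ≤ κu * qp - tNoN →
      ∀ qN : ℝ, 0 ≤ qN → qN ≤ qf → qN ≤ (κu * qp - tNoN - Δp) / κu →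
        xN tN tNoN κu Δp qN qp ≤ 0 ∧
        ∀ qN' qNoN' : ℝ, Feas qf qp qN' qNoN' 1 →
          xN tN tNoN κu Δp qN' qNoN' ≤ 0 →
          Pi tN tNoN κu Δp κad ptilde qN' qNoN' 1 ≤
            Pi tN tNoN κu Δp κad ptilde qN qp 1) := by
  have hT : 0 < tN + tNoN := by linarith
  have hnN0 : ∀ a b : ℝ, xN tN tNoN κu Δp a b ≤ 0 → nN tN tNoN κu Δp a b = 0 := by
    intro a b h
    simp [nN, max_eq_left h, min_eq_right (by norm_num : (0:ℝ) ≤ 1)]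
  have hPi0 : ∀ a b z : ℝ, xN tN tNoN κu Δp a b ≤ 0 →
      Pi tN tNoN κu Δp κad ptilde a b z = (κad - z * ptilde) * b := by
    intro a b z h
    simp only [Pi, hnN0 a b h]; ring
  have hxiff : ∀ a b : ℝ, xN tN tNoN κu Δp a b ≤ 0 ↔ tNoN + κu * (a - b) + Δp ≤ 0 := by
    intro a b
    unfold xN
    constructor
    · intro h
      rcases div_nonpos_iff.mp h with ⟨_, h2⟩ | ⟨h1, _⟩
      · linarith
      · exact h1
    · intro h; exact div_nonpos_iff.mpr (Or.inr ⟨h, hT.le⟩)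
  have hmono : ∀ a b b' : ℝ, b ≤ b' → xN tN tNoN κu Δp a b ≤ 0 →
      xN tN tNoN κu Δp a b' ≤ 0 := by
    intro a b b' hbb h
    rw [hxiff] at h ⊢
    nlinarith
  have hnNmem : ∀ a b : ℝ, 0 ≤ nN tN tNoN κu Δp a b ∧ nN tN tNoN κu Δp a b ≤ 1 := by
    intro a b
    constructor
    · exact le_min (by norm_num) (le_max_left _ _)
    · exact min_le_left _ _
  refine ⟨?_, ?_, ?_⟩
  · -- Part 1
    intro qNs qNoNs zs hfeas hmax hx
    obtain ⟨hqN0, hqNf, hz⟩ := hfeas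
    constructor
    · intro hz0
      rcases hz with ⟨_, hb0, hbf⟩ | ⟨h1, _, _⟩
      · -- compare with (qNs, qf, 0)
        have hx' : xN tN tNoN κu Δp qNs qf ≤ 0 := hmono _ _ _ hbf hx
        have hcomp := hmax qNs qf 0 ⟨hqN0, hqNf, Or.inl ⟨rfl, hqf.le, le_rfl⟩⟩
        rw [hPi0 _ _ _ hx', hPi0 _ _ _ hx, hz0] at hcomp
        nlinarith
      · rw [hz0] at h1; norm_num at h1
    · intro hz1
      rcases hz with ⟨h0, _, _⟩ | ⟨_, hfb, hbp⟩
      · rw [hz1] at h0; norm_num at h0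
      · by_cases hp : ptilde < κad
        · -- compare with (qNs, qp, 1)
          have hx' : xN tN tNoN κu Δp qNs qp ≤ 0 := hmono _ _ _ hbp hx
          have hcomp := hmax qNs qp 1 ⟨hqN0, hqNf, Or.inr ⟨rfl, hq, le_rfl⟩⟩
          rw [hPi0 _ _ _ hx', hPi0 _ _ _ hx, hz1] at hcomp
          nlinarith
        · -- κad ≤ ptilde: contradiction via (qf, qf, 0)
          push_neg at hp
          exfalso
          have hcomp := hmax qf qf 0 ⟨hqf.le, le_rfl, Or.inl ⟨rfl, hqf.le, le_rfl⟩⟩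
          rw [hPi0 _ _ _ hx, hz1] at hcomp
          have hPiqf : Pi tN tNoN κu Δp κad ptilde qf qf 0 = κad * qf := by
            simp only [Pi]; ring
          rw [hPiqf] at hcomp
          nlinarith
  · -- Part 2
    intro hΔp qN h0 hf hbound
    have hb : qN * κu ≤ κu * qf - tNoN - Δp := (le_div_iff₀ hκu).mp hbound
    have hx : xN tN tNoN κu Δp qN qf ≤ 0 := (hxiff _ _).mpr (by nlinarith)
    refine ⟨hx, ?_⟩
    intro qN' qNoN' hfeas hx'
    obtain ⟨_, _, hz⟩ := hfeas
    rcases hz with ⟨_, hb0, hbf⟩ | ⟨h1, _, _⟩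
    · rw [hPi0 _ _ _ hx', hPi0 _ _ _ hx]
      nlinarith
    · norm_num at h1
  · -- Part 3
    intro hpt hΔp qN h0 hf hbound
    have hb : qN * κu ≤ κu * qp - tNoN - Δp := (le_div_iff₀ hκu).mp hbound
    have hx : xN tN tNoN κu Δp qN qp ≤ 0 := (hxiff _ _).mpr (by nlinarith)
    refine ⟨hx, ?_⟩
    intro qN' qNoN' hfeas hx'
    obtain ⟨_, _, hz⟩ := hfeas
    rcases hz with ⟨h0', _, _⟩ | ⟨_, hfb, hbp⟩
    · norm_num at h0'
    · rw [hPi0 _ _ _ hx', hPi0 _ _ _ hx]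
      nlinarith
end
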